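/- arXiv:math/0411368 — 3 statements merged into one kernel-verified Lean document; each statement's English description precedes it below -/
import Mathlib

section
/- Let n ≥ 0, let A_0 ≤ A_1 ≤ ⋯ ≤ A_n be an increasing chain of subgroups of a group A_n, and let B_0 ≤ B_1 ≤ ⋯ ≤ B_n be an increasing chain of subgroups of a group B_n. Let G be a group equipped with homomorphisms φ_k : A_{n−k} × B_k → G for k = 0, …, n such that φ_k(a,b) = φ_{k+1}(a,b) whenever a ∈ A_{n−k−1} and b ∈ B_k (0 ≤ k < n), and suppose (G, (φ_k)) is the colimit of this diagram: for every group H and homomorphisms ψ_k : A_{n−k} × B_k → H satisfying the same compatibility conditions, there is a unique homomorphism h : G → H with ψ_k = h ∘ φ_k for all k. Define j : A_n → G by j(a) = φ_0(a,1) and j' : B_n → G by j'(b) = φ_n(1,b). Then the homomorphism j ∗ j' : A_n ∗ B_n → G from the free product is surjective, and its kernel is the smallest normal subgroup N of A_n ∗ B_n containing all commutators [a,b] with a ∈ A_{n−k}, b ∈ B_k, for k = 0, 1, …, n (where A_{n−k} and B_k are viewed inside the free product via A_{n−k} ≤ A_n and B_k ≤ B_n). -/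
/-!
Compatibility along the zig-zag forces `φ_k (a, b) = j a * j' b`, so `j a` and `j' b` commute
for `a ∈ A_{n-k}`, `b ∈ B_k`, and every `φ_k` lands in the range of `j ∗ j'`; by the uniqueness
in the universal property a subgroup containing the images of all `φ_k` is all of `G`.
Conversely, homomorphisms `f`, `g` out of `A` and `B` with these commutations form the cocone
`(a, b) ↦ f a * g b` and hence factor through `G`. For the projection of `A ∗ B` onto its
quotient by `N` this gives a map `G → (A ∗ B) ⧸ N` whose composite with `j ∗ j'` is the projection,
so the kernel of `j ∗ j'` lies in `N`.
-/

open Monoid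
open scoped commutatorElement

section Zigzag

variable {A B : Type*} [Group A] [Group B] {n : ℕ}
  {𝒜 : ℕ → Subgroup A} {ℬ : ℕ → Subgroup B}
  (h𝒜 : ∀ j k, j ≤ k → k ≤ n → 𝒜 j ≤ 𝒜 k) (hℬ : ∀ j k, j ≤ k → k ≤ n → ℬ j ≤ ℬ k)

/-- `ψ` is a cocone on the zig-zag diagram of the `A_{n-k} × B_k`, whose arrows are the inclusions
`A_{n-k-1} × B_k → A_{n-k} × B_k` and `A_{n-k-1} × B_k → A_{n-k-1} × B_{k+1}`. -/
def ZigzagCompatible {H : Type*} [Group H] (ψ : ∀ k, k ≤ n → (𝒜 (n - k) × ℬ k) →* H) : Prop :=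
  ∀ (k : ℕ) (hk : k < n) (a : A) (b : B) (ha : a ∈ 𝒜 (n - (k + 1))) (hb : b ∈ ℬ k),
    ψ k hk.le
        (⟨a, h𝒜 (n - (k + 1)) (n - k) (Nat.sub_le_sub_left k.le_succ n) (n.sub_le k) ha⟩, ⟨b, hb⟩)
      = ψ (k + 1) hk (⟨a, ha⟩, ⟨b, hℬ k (k + 1) k.le_succ hk hb⟩)

namespace ZigzagCompatible

variable {h𝒜 hℬ} {H : Type*} [Group H] {ψ : ∀ k, k ≤ n → (𝒜 (n - k) × ℬ k) →* H}

theorem apply_fst (hψ : ZigzagCompatible h𝒜 hℬ ψ) {k : ℕ} (hk : k ≤ n) {a : A}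
    (ha : a ∈ 𝒜 (n - k)) :
    ψ k hk (⟨a, ha⟩, 1) = ψ 0 (Nat.zero_le n) (⟨a, h𝒜 (n - k) n (n.sub_le k) le_rfl ha⟩, 1) := by
  induction k with
  | zero => rfl
  | succ k ih =>
    rw [← ih (k.le_succ.trans hk)
      (h𝒜 (n - (k + 1)) (n - k) (Nat.sub_le_sub_left k.le_succ n) (n.sub_le k) ha)]
    exact (hψ k hk a 1 ha (one_mem _)).symm

theorem apply_snd (hψ : ZigzagCompatible h𝒜 hℬ ψ) {k : ℕ} (hk : k ≤ n) {b : B}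
    (hb : b ∈ ℬ k) :
    ψ k hk (1, ⟨b, hb⟩) = ψ n le_rfl (1, ⟨b, hℬ k n hk le_rfl hb⟩) := by
  induction hk using Nat.decreasingInduction with
  | self => rfl
  | of_succ k hk ih =>
    rw [← ih (hℬ k (k + 1) k.le_succ hk hb)]
    exact hψ k hk 1 b (one_mem _) hb

variable {f : A →* H} {g : B →* H}

theorem apply_eq_mul (hψ : ZigzagCompatible h𝒜 hℬ ψ)
    (hf : ∀ a (ha : a ∈ 𝒜 n), f a = ψ 0 (Nat.zero_le n) (⟨a, ha⟩, 1))
    (hg : ∀ b (hb : b ∈ ℬ n), g b = ψ n le_rfl (1, ⟨b, hb⟩)) {k : ℕ} (hk : k ≤ n)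
    (p : 𝒜 (n - k) × ℬ k) : ψ k hk p = f p.1 * g p.2 := by
  rw [hf _ (h𝒜 _ _ (n.sub_le k) le_rfl p.1.2), hg _ (hℬ k n hk le_rfl p.2.2),
    ← hψ.apply_fst hk p.1.2, ← hψ.apply_snd hk p.2.2, ← map_mul, Prod.fst_mul_snd]

theorem commute (hψ : ZigzagCompatible h𝒜 hℬ ψ)
    (hf : ∀ a (ha : a ∈ 𝒜 n), f a = ψ 0 (Nat.zero_le n) (⟨a, ha⟩, 1))
    (hg : ∀ b (hb : b ∈ ℬ n), g b = ψ n le_rfl (1, ⟨b, hb⟩)) {k : ℕ} (hk : k ≤ n)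
    {a b} (ha : a ∈ 𝒜 (n - k)) (hb : b ∈ ℬ k) : Commute (f a) (g b) := by
  rw [hf _ (h𝒜 _ _ (n.sub_le k) le_rfl ha), hg _ (hℬ k n hk le_rfl hb), ← hψ.apply_fst hk ha,
    ← hψ.apply_snd hk hb]
  exact (MonoidHom.commute_inl_inr _ _).map (ψ k hk)

end ZigzagCompatible

def zigzagCocone {H : Type*} [Group H] (f : A →* H) (g : B →* H)
    (hfg : ∀ k ≤ n, ∀ a ∈ 𝒜 (n - k), ∀ b ∈ ℬ k, Commute (f a) (g b)) (k : ℕ) (hk : k ≤ n) :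
    (𝒜 (n - k) × ℬ k) →* H :=
  (f.comp (𝒜 (n - k)).subtype).noncommCoprod (g.comp (ℬ k).subtype)
    fun a b => hfg k hk a a.2 b b.2

theorem zigzagCocone_compatible {H : Type*} [Group H] (f : A →* H) (g : B →* H)
    (hfg : ∀ k ≤ n, ∀ a ∈ 𝒜 (n - k), ∀ b ∈ ℬ k, Commute (f a) (g b)) :
    ZigzagCompatible h𝒜 hℬ (zigzagCocone f g hfg) :=
  fun _ _ _ _ _ _ => rfl

def IsZigzagColimit {G : Type*} [Group G] (φ : ∀ k, k ≤ n → (𝒜 (n - k) × ℬ k) →* G) : Prop :=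
  ZigzagCompatible h𝒜 hℬ φ ∧
    ∀ (H : Type) [Group H] (ψ : ∀ k, k ≤ n → (𝒜 (n - k) × ℬ k) →* H),
      ZigzagCompatible h𝒜 hℬ ψ → ∃! h : G →* H, ∀ k hk, h.comp (φ k hk) = ψ k hk

def zigzagCommutators (n : ℕ) (𝒜 : ℕ → Subgroup A) (ℬ : ℕ → Subgroup B) : Set (Coprod A B) :=
  {w | ∃ k ≤ n, ∃ a ∈ 𝒜 (n - k), ∃ b ∈ ℬ k,
    w = ⁅(Coprod.inl a : Coprod A B), (Coprod.inr b : Coprod A B)⁆}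

end Zigzag

namespace IsZigzagColimit

variable {A B : Type} [Group A] [Group B] {n : ℕ}
  {𝒜 : ℕ → Subgroup A} {ℬ : ℕ → Subgroup B}
  {h𝒜 : ∀ j k, j ≤ k → k ≤ n → 𝒜 j ≤ 𝒜 k} {hℬ : ∀ j k, j ≤ k → k ≤ n → ℬ j ≤ ℬ k}
  {G : Type} [Group G] {φ : ∀ k, k ≤ n → (𝒜 (n - k) × ℬ k) →* G}

theorem hom_ext (hφ : IsZigzagColimit h𝒜 hℬ φ) {H : Type} [Group H] {h₁ h₂ : G →* H}
    (h : ∀ k hk, h₁.comp (φ k hk) = h₂.comp (φ k hk)) : h₁ = h₂ :=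
  (hφ.2 H (fun k hk => h₂.comp (φ k hk))
    fun k hk a b ha hb => congrArg h₂ (hφ.1 k hk a b ha hb)).unique h fun _ _ => rfl

theorem eq_top_of_forall_mem (hφ : IsZigzagColimit h𝒜 hℬ φ) {K : Subgroup G}
    (hK : ∀ k hk p, φ k hk p ∈ K) : K = ⊤ := by
  obtain ⟨h, hh, -⟩ := hφ.2 K (fun k hk => (φ k hk).codRestrict K (hK k hk))
    fun k hk a b ha hb => Subtype.ext (hφ.1 k hk a b ha hb)
  have hsection : K.subtype.comp h = MonoidHom.id G :=
    hφ.hom_ext fun k hk => by rw [MonoidHom.comp_assoc, hh k hk]; rfl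
  refine eq_top_iff.2 fun g _ => ?_
  rw [← MonoidHom.id_apply G g, ← hsection]
  exact (h g).2

variable {j : A →* G} {j' : B →* G}

theorem surjective_lift (hφ : IsZigzagColimit h𝒜 hℬ φ)
    (hj : ∀ a (ha : a ∈ 𝒜 n), j a = φ 0 (Nat.zero_le n) (⟨a, ha⟩, 1))
    (hj' : ∀ b (hb : b ∈ ℬ n), j' b = φ n le_rfl (1, ⟨b, hb⟩)) :
    Function.Surjective (Coprod.lift j j') :=
  MonoidHom.range_eq_top.1 <| hφ.eq_top_of_forall_mem fun k hk p =>
    ⟨Coprod.inl p.1.1 * Coprod.inr p.2.1, by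
      rw [map_mul, Coprod.lift_apply_inl, Coprod.lift_apply_inr, hφ.1.apply_eq_mul hj hj']⟩

theorem exists_comp_eq (hφ : IsZigzagColimit h𝒜 hℬ φ) (h𝒜top : 𝒜 n = ⊤) (hℬtop : ℬ n = ⊤)
    (hj : ∀ a (ha : a ∈ 𝒜 n), j a = φ 0 (Nat.zero_le n) (⟨a, ha⟩, 1))
    (hj' : ∀ b (hb : b ∈ ℬ n), j' b = φ n le_rfl (1, ⟨b, hb⟩))
    {H : Type} [Group H] (f : A →* H) (g : B →* H)
    (hfg : ∀ k ≤ n, ∀ a ∈ 𝒜 (n - k), ∀ b ∈ ℬ k, Commute (f a) (g b)) :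
    ∃ h : G →* H, h.comp j = f ∧ h.comp j' = g := by
  obtain ⟨h, hh, -⟩ := hφ.2 H (zigzagCocone f g hfg) (zigzagCocone_compatible h𝒜 hℬ f g hfg)
  refine ⟨h, MonoidHom.ext fun a => ?_, MonoidHom.ext fun b => ?_⟩
  · rw [MonoidHom.comp_apply, hj a (h𝒜top ▸ Subgroup.mem_top a), ← MonoidHom.comp_apply, hh]
    exact (congrArg _ (map_one g)).trans (mul_one (f a))
  · rw [MonoidHom.comp_apply, hj' b (hℬtop ▸ Subgroup.mem_top b), ← MonoidHom.comp_apply, hh]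
    exact (congrArg (· * g b) (map_one f)).trans (one_mul (g b))

open Subgroup in
theorem ker_lift (hφ : IsZigzagColimit h𝒜 hℬ φ) (h𝒜top : 𝒜 n = ⊤) (hℬtop : ℬ n = ⊤)
    (hj : ∀ a (ha : a ∈ 𝒜 n), j a = φ 0 (Nat.zero_le n) (⟨a, ha⟩, 1))
    (hj' : ∀ b (hb : b ∈ ℬ n), j' b = φ n le_rfl (1, ⟨b, hb⟩)) :
    (Coprod.lift j j').ker = normalClosure (zigzagCommutators n 𝒜 ℬ) := by
  set N := normalClosure (zigzagCommutators n 𝒜 ℬ)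
  refine le_antisymm ?_ <| normalClosure_le_normal ?_
  · let π := QuotientGroup.mk' N
    have hπ : ∀ k ≤ n, ∀ a ∈ 𝒜 (n - k), ∀ b ∈ ℬ k,
        Commute (π.comp Coprod.inl a) (π.comp Coprod.inr b) := fun k hk a ha b hb => by
      rw [← commutatorElement_eq_one_iff_commute, MonoidHom.comp_apply, MonoidHom.comp_apply,
        ← map_commutatorElement, QuotientGroup.mk'_apply, QuotientGroup.eq_one_iff]
      exact subset_normalClosure ⟨k, hk, a, ha, b, hb, rfl⟩
    obtain ⟨h, hhj, hhj'⟩ := hφ.exists_comp_eq h𝒜top hℬtop hj hj' _ _ hπ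
    have hfactor : h.comp (Coprod.lift j j') = π := Coprod.hom_ext hhj hhj'
    calc (Coprod.lift j j').ker ≤ h.ker.comap (Coprod.lift j j') := MonoidHom.ker_le_comap _ _
      _ = N := by rw [MonoidHom.comap_ker, hfactor, QuotientGroup.ker_mk']
  · rintro _ ⟨k, hk, a, ha, b, hb, rfl⟩
    rw [SetLike.mem_coe, MonoidHom.mem_ker, map_commutatorElement, Coprod.lift_apply_inl,
      Coprod.lift_apply_inr, commutatorElement_eq_one_iff_commute]
    exact hφ.1.commute hj hj' hk ha hb

end IsZigzagColimit

/-- Let `A_0 ≤ ⋯ ≤ A_n` and `B_0 ≤ ⋯ ≤ B_n` be increasing chains of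
subgroups of groups `A = A_n` and `B = B_n`, and let `G`, with compatible homomorphisms
`φ_k : A_{n-k} × B_k → G` (`k = 0, …, n`), be the colimit of the zig-zag diagram formed
by the products `A_{n-k} × B_k` and the inclusions
`A_{n-k-1} × B_k → A_{n-k} × B_k`, `A_{n-k-1} × B_k → A_{n-k-1} × B_{k+1}`.
Let `j : A → G`, `j(a) = φ_0(a,1)` and `j' : B → G`, `j'(b) = φ_n(1,b)`.  Then
`j ∗ j' : A ∗ B → G` is surjective with kernel the smallest normal subgroup containing
all commutators `[a,b]` with `a ∈ A_{n-k}`, `b ∈ B_k`, `k = 0, 1, …, n`. -/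
theorem free_product_presentation_of_colimit
    {A B G : Type} [Group A] [Group B] [Group G] (n : ℕ)
    (𝒜 : ℕ → Subgroup A) (ℬ : ℕ → Subgroup B)
    (h𝒜 : ∀ j k, j ≤ k → k ≤ n → 𝒜 j ≤ 𝒜 k)
    (hℬ : ∀ j k, j ≤ k → k ≤ n → ℬ j ≤ ℬ k)
    (h𝒜top : 𝒜 n = ⊤) (hℬtop : ℬ n = ⊤)
    (φ : ∀ k, k ≤ n → (↥(𝒜 (n - k)) × ↥(ℬ k)) →* G)
    (hφ : ∀ (k : ℕ) (hk : k < n) (a : A) (b : B)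
        (ha : a ∈ 𝒜 (n - (k + 1))) (hb : b ∈ ℬ k),
        φ k hk.le (⟨a, h𝒜 (n - (k+1)) (n - k) (by omega) (by omega) ha⟩, ⟨b, hb⟩)
          = φ (k + 1) hk (⟨a, ha⟩, ⟨b, hℬ k (k+1) (by omega) hk hb⟩))
    (hcolim : ∀ (H : Type) [Group H],
        ∀ ψ : ∀ k, k ≤ n → (↥(𝒜 (n - k)) × ↥(ℬ k)) →* H,
        (∀ (k : ℕ) (hk : k < n) (a : A) (b : B)
            (ha : a ∈ 𝒜 (n - (k + 1))) (hb : b ∈ ℬ k),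
            ψ k hk.le (⟨a, h𝒜 (n - (k+1)) (n - k) (by omega) (by omega) ha⟩, ⟨b, hb⟩)
              = ψ (k + 1) hk (⟨a, ha⟩, ⟨b, hℬ k (k+1) (by omega) hk hb⟩)) →
        ∃! h : G →* H, ∀ (k : ℕ) (hk : k ≤ n), h.comp (φ k hk) = ψ k hk)
    (j : A →* G) (hj : ∀ a : A, j a = φ 0 (Nat.zero_le n) (⟨a, by simp [h𝒜top]⟩, 1))
    (j' : B →* G) (hj' : ∀ b : B, j' b = φ n le_rfl (1, ⟨b, by simp [hℬtop]⟩)) :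
    Function.Surjective (Coprod.lift j j') ∧
    MonoidHom.ker (Coprod.lift j j') = Subgroup.normalClosure
      {w : Coprod A B | ∃ k ≤ n, ∃ a ∈ 𝒜 (n - k), ∃ b ∈ ℬ k,
        w = ⁅(Coprod.inl a : Coprod A B), (Coprod.inr b : Coprod A B)⁆} := by
  have hcolimit : IsZigzagColimit h𝒜 hℬ φ := ⟨hφ, fun H _ ψ hψ => hcolim H ψ hψ⟩
  exact ⟨hcolimit.surjective_lift (fun a _ => hj a) (fun b _ => hj' b),
    hcolimit.ker_lift h𝒜top hℬtop (fun a _ => hj a) (fun b _ => hj' b)⟩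
end

section
/- Fix integers k ≥ 3 and n ≥ 1 and a real number L ≥ max(1, n−1), and let S be the star with k edges of length L. Let c ⊆ S be a regular n-element configuration. Then: (a) there is at least one index i with A_i(c) ≠ ∅ and d(v, A_i(c)) ≤ 1/2; (b) there is at most one index i with 0 < d(v, A_i(c)) < 1/2; and (c) if i is an index with 0 < d(v, A_i(c)) < 1/2, then every other index j ≠ i with A_j(c) ≠ ∅ satisfies d(v, A_j(c)) = 1 − d(v, A_i(c)). -/
noncomputable section

open Set Metric

variable {k : ℕ} {L : ℝ}

/-- `(S, v, e)` is (a realization of) the star with `k` edges of length `L`: the quotient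
metric space of `(Fin k) × [0,L]` identifying all points `(i,0)` to the single center
point `v`, so that `S` is covered by the parametrized edges `e i : [0,L] → S` and the
metric is `d(e i s, e j t) = |s - t|` if `i = j` and `= s + t` otherwise. -/
def IsStar {S : Type*} [MetricSpace S] (v : S) (e : Fin k → ℝ → S) (L : ℝ) : Prop :=
  (∀ i : Fin k, e i 0 = v) ∧
  (∀ x : S, ∃ i, ∃ s ∈ Set.Icc (0:ℝ) L, x = e i s) ∧
  (∀ i j : Fin k, ∀ s ∈ Set.Icc (0:ℝ) L, ∀ t ∈ Set.Icc (0:ℝ) L,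
    dist (e i s) (e j t) = if i = j then |s - t| else s + t)

variable {S : Type*} [MetricSpace S] (e : Fin k → ℝ → S)

/-- The `i`-th closed edge of the star. -/
def starEdge (i : Fin k) (L : ℝ) : Set S := (e i) '' Set.Icc (0:ℝ) L

/-- The `i`-th arm of a configuration `c`. -/
def arm (c : Set S) (i : Fin k) (L : ℝ) : Set S := c ∩ starEdge e i L

/-- A configuration `c` in the star is regular if: (1) distinct points of `c` are at
distance `≥ 1`, with distance exactly `1` for points on a common edge with no point of
`c` strictly between them; and (2) if the center `v` is not in `c`, then every nonempty
arm of `c` is at distance exactly `1` from some point of `c`. -/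
def RegularConfig (v : S) (c : Set S) (L : ℝ) : Prop :=
  (∀ x ∈ c, ∀ y ∈ c, x ≠ y → 1 ≤ dist x y) ∧
  (∀ i : Fin k, ∀ s ∈ Set.Icc (0:ℝ) L, ∀ t ∈ Set.Icc (0:ℝ) L,
    e i s ∈ c → e i t ∈ c → s < t →
    (∀ u : ℝ, s < u → u < t → e i u ∉ c) →
    dist (e i s) (e i t) = 1) ∧
  (v ∉ c → ∀ i : Fin k, (arm e c i L).Nonempty →
    ∃ x ∈ c, Metric.infDist x (arm e c i L) = 1)

/-- If every point of a nonempty finite set `A` satisfies `dist x y = t + dist v y`,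
then `infDist x A = t + infDist v A`. -/
lemma infDist_shift_aux {S : Type*} [MetricSpace S] {A : Set S} {x v : S} {t : ℝ}
    (hA : A.Finite) (hne : A.Nonempty) (h : ∀ y ∈ A, dist x y = t + dist v y) :
    Metric.infDist x A = t + Metric.infDist v A := by
  obtain ⟨y₀, hy₀, h₀⟩ := hA.isCompact.exists_infDist_eq_dist hne v
  obtain ⟨y₁, hy₁, h₁⟩ := hA.isCompact.exists_infDist_eq_dist hne x
  have l1 : Metric.infDist x A ≤ dist x y₀ := Metric.infDist_le_dist_of_mem hy₀
  have l2 : Metric.infDist v A ≤ dist v y₁ := Metric.infDist_le_dist_of_mem hy₁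
  have e0 := h y₀ hy₀
  have e1 := h y₁ hy₁
  linarith

/-- For a regular `n`-point configuration `c` in the star with
`k ≥ 3` edges of length `L ≥ max(1, n-1)`: (a) some nonempty arm is at distance `≤ 1/2`
from the center `v`; (b) at most one arm satisfies `0 < d(v, A_i(c)) < 1/2`; and (c) if
`0 < d(v, A_i(c)) < 1/2` then every other nonempty arm `A_j(c)` (`j ≠ i`) satisfies
`d(v, A_j(c)) = 1 - d(v, A_i(c))`. -/

theorem regular_config_governing_arm (hk : 3 ≤ k) (n : ℕ) (hn : 1 ≤ n)
    (hL : max 1 ((n : ℝ) - 1) ≤ L)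
    {S : Type*} [MetricSpace S] (v : S) (e : Fin k → ℝ → S) (hstar : IsStar v e L)
    (c : Set S) (hfin : c.Finite) (hcard : c.ncard = n) (hreg : RegularConfig e v c L) :
    (∃ i : Fin k, (arm e c i L).Nonempty ∧
        Metric.infDist v (arm e c i L) ≤ 1 / 2) ∧
    (∀ i j : Fin k,
      0 < Metric.infDist v (arm e c i L) →
      Metric.infDist v (arm e c i L) < 1 / 2 →
      0 < Metric.infDist v (arm e c j L) →
      Metric.infDist v (arm e c j L) < 1 / 2 → i = j) ∧
    (∀ i j : Fin k,
      0 < Metric.infDist v (arm e c i L) →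
      Metric.infDist v (arm e c i L) < 1 / 2 →
      j ≠ i → (arm e c j L).Nonempty →
      Metric.infDist v (arm e c j L) = 1 - Metric.infDist v (arm e c i L)) := by
  obtain ⟨hv, hsurj, hd⟩ := hstar
  obtain ⟨h1, h2, h3⟩ := hreg
  have hL1 : (1:ℝ) ≤ L := le_trans (le_max_left _ _) hL
  have hL0 : (0:ℝ) ≤ L := by linarith
  have h0mem : (0:ℝ) ∈ Set.Icc (0:ℝ) L := ⟨le_refl 0, hL0⟩
  have hdist : ∀ (i : Fin k), ∀ s ∈ Set.Icc (0:ℝ) L, dist v (e i s) = s := by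
    intro i s hs
    rw [← hv i, hd i i 0 h0mem s hs, if_pos rfl, zero_sub, abs_neg, abs_of_nonneg hs.1]
  have armfin : ∀ i : Fin k, (arm e c i L).Finite := fun i =>
    hfin.subset Set.inter_subset_left
  -- nearest point of a nonempty arm
  have nearest : ∀ i : Fin k, (arm e c i L).Nonempty →
      ∃ s ∈ Set.Icc (0:ℝ) L, e i s ∈ c ∧ Metric.infDist v (arm e c i L) = s := by
    intro i hne
    obtain ⟨y, hy, hyd⟩ := (armfin i).isCompact.exists_infDist_eq_dist hne v
    obtain ⟨hyc, s, hs, rfl⟩ := hy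
    exact ⟨s, hs, hyc, by rw [hyd, hdist i s hs]⟩
  -- positivity when v ∉ c
  have hpos : v ∉ c → ∀ i : Fin k, (arm e c i L).Nonempty →
      0 < Metric.infDist v (arm e c i L) := by
    intro hvc i hne
    obtain ⟨s, hs, hsc, hdi⟩ := nearest i hne
    rcases lt_or_eq_of_le hs.1 with h | h
    · rw [hdi]; exact h
    · exact absurd (by rw [← h] at hsc; rwa [hv i] at hsc) hvc
  -- sum of distances of two distinct nonempty arms is ≥ 1
  have key : v ∉ c → ∀ i j : Fin k, i ≠ j → (arm e c i L).Nonempty →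
      (arm e c j L).Nonempty →
      1 ≤ Metric.infDist v (arm e c i L) + Metric.infDist v (arm e c j L) := by
    intro hvc i j hij hni hnj
    obtain ⟨s, hs, hsc, hdi⟩ := nearest i hni
    obtain ⟨t, ht, htc, hdj⟩ := nearest j hnj
    have hsp : 0 < s := by rw [← hdi]; exact hpos hvc i hni
    have hdst : dist (e i s) (e j t) = s + t := by
      rw [hd i j s hs t ht, if_neg hij]
    have hne' : e i s ≠ e j t := by
      intro h
      rw [h, dist_self] at hdst
      linarith [ht.1]
    have := h1 (e i s) hsc (e j t) htc hne'
    rw [hdst] at this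
    rw [hdi, hdj]
    linarith
  -- every nonempty arm has a "partner" arm at distance 1 - d_i
  have partner : v ∉ c → ∀ i : Fin k, (arm e c i L).Nonempty →
      ∃ j : Fin k, j ≠ i ∧ (arm e c j L).Nonempty ∧
        Metric.infDist v (arm e c j L) = 1 - Metric.infDist v (arm e c i L) := by
    intro hvc i hne
    obtain ⟨x, hxc, hx1⟩ := h3 hvc i hne
    obtain ⟨j, t, ht, rfl⟩ := hsurj x
    have hji : j ≠ i := by
      rintro rfl
      have hmem : e j t ∈ arm e c j L := ⟨hxc, t, ht, rfl⟩
      rw [Metric.infDist_zero_of_mem hmem] at hx1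
      norm_num at hx1
    have hshift : Metric.infDist (e j t) (arm e c i L)
        = t + Metric.infDist v (arm e c i L) := by
      refine infDist_shift_aux (armfin i) hne ?_
      rintro y ⟨hyc, s, hs, rfl⟩
      rw [hd j i t ht s hs, if_neg hji, hdist i s hs]
    have harmj : (arm e c j L).Nonempty := ⟨e j t, hxc, t, ht, rfl⟩
    have hle : Metric.infDist v (arm e c j L) ≤ t := by
      have hmem : e j t ∈ arm e c j L := ⟨hxc, t, ht, rfl⟩
      have h' : Metric.infDist v (arm e c j L) ≤ dist v (e j t) :=
        Metric.infDist_le_dist_of_mem hmem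
      rwa [hdist j t ht] at h'
    have hge := key hvc j i hji harmj hne
    rw [hshift] at hx1
    exact ⟨j, hji, harmj, by linarith⟩
  -- nonemptiness from positive infDist
  have ne_of_pos : ∀ i : Fin k, 0 < Metric.infDist v (arm e c i L) →
      (arm e c i L).Nonempty := by
    intro i hi
    rcases Set.eq_empty_or_nonempty (arm e c i L) with h | h
    · rw [h, Metric.infDist_empty] at hi; linarith
    · exact h
  have vnotc_of_pos : ∀ i : Fin k, 0 < Metric.infDist v (arm e c i L) → v ∉ c := by
    intro i hi hvc
    have hmem : v ∈ arm e c i L := ⟨hvc, 0, h0mem, hv i⟩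
    rw [Metric.infDist_zero_of_mem hmem] at hi
    linarith
  refine ⟨?_, ?_, ?_⟩
  · -- part (a)
    by_cases hvc : v ∈ c
    · have i0 : Fin k := ⟨0, by omega⟩
      have hmem : v ∈ arm e c i0 L := ⟨hvc, 0, h0mem, hv i0⟩
      refine ⟨i0, ⟨v, hmem⟩, ?_⟩
      rw [Metric.infDist_zero_of_mem hmem]
      norm_num
    · have hcne : c.Nonempty := by
        rcases Set.eq_empty_or_nonempty c with h | h
        · rw [h, Set.ncard_empty] at hcard; omega
        · exact h
      obtain ⟨x, hxc⟩ := hcne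
      obtain ⟨i, s, hs, rfl⟩ := hsurj x
      have hni : (arm e c i L).Nonempty := ⟨e i s, hxc, s, hs, rfl⟩
      obtain ⟨j, hji, hnj, hdj⟩ := partner hvc i hni
      by_cases hhalf : Metric.infDist v (arm e c i L) ≤ 1 / 2
      · exact ⟨i, hni, hhalf⟩
      · exact ⟨j, hnj, by rw [hdj]; linarith⟩
  · -- part (b)
    intro i j hi1 hi2 hj1 hj2
    by_contra hij
    have hvc := vnotc_of_pos i hi1
    have := key hvc i j hij (ne_of_pos i hi1) (ne_of_pos j hj1)
    linarith
  · -- part (c)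
    intro i j hi1 hi2 hji hjne
    have hvc := vnotc_of_pos i hi1
    have hine := ne_of_pos i hi1
    have hij_sum := key hvc i j (Ne.symm hji) hine hjne
    obtain ⟨j', hj'j, hj'ne, hj'd⟩ := partner hvc j hjne
    by_cases hj'i : j' = i
    · rw [hj'i] at hj'd; linarith
    · have := key hvc j' i hj'i hj'ne hine
      linarith


end
end

section
/- Fix integers k ≥ 3 and n ≥ 2 and a real number L ≥ max(1, n−1), and let S be the star with k edges of length L. Let c ⊆ S be a regular (n−1)-element configuration. Then for each index i with 0 ≤ i < k there exists a unique point x on the i-th edge of S such that x ∉ c and {x} ∪ c is a regular n-element configuration. -/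
/-!
Along an edge, the parameters of the points of a regular configuration form a progression
`a, a + 1, …, b` with `a < 1`: either the center is occupied and `a = 0`, or some point at
height `u > 0` on another edge is at distance `u + a = 1` from the arm. A point added to a
nonempty arm must continue this progression, so it sits at `b + 1`, which fits on the edge since
`b + 1 = a + #arm ≤ #c ≤ L`. On an empty arm, a point at height `s` must be at distance `≥ 1`
from the point of `c` nearest to the center, at height `β`, and at distance exactly `1` from some
point of `c`, which forces `s = 1 - β`.
-/

noncomputable section

open Set Metric

variable {k : ℕ} {L : ℝ}

variable {S : Type*} [MetricSpace S] (e : Fin k → ℝ → S)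

lemma Metric.infDist_insert_of_infDist_le_dist {α : Type*} [PseudoMetricSpace α] {x y : α}
    {s : Set α} (hs : s.Nonempty) (h : infDist x s ≤ dist x y) :
    infDist x (insert y s) = infDist x s := by
  refine le_antisymm (infDist_le_infDist_of_subset (subset_insert y s) hs) ?_
  refine (le_infDist (insert_nonempty y s)).2 ?_
  rintro z (rfl | hz)
  exacts [h, infDist_le_dist_of_mem hz]

def HasUnitGaps (T : Set ℝ) : Prop :=
  ∀ s ∈ T, ∀ t ∈ T, s < t → (∀ u ∈ T, u ∉ Ioo s t) → t - s = 1

lemma hasUnitGaps_singleton (a : ℝ) : HasUnitGaps {a} := by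
  rintro s rfl t rfl hst
  exact absurd hst (lt_irrefl _)

namespace HasUnitGaps

variable {T : Set ℝ} {a b : ℝ}

lemma of_insert_of_forall_lt (h : HasUnitGaps (insert b T)) (hb : ∀ t ∈ T, t < b) :
    HasUnitGaps T := by
  refine fun s hs t ht hst hgap ↦ h s (mem_insert_of_mem b hs) t (mem_insert_of_mem b ht) hst ?_
  rintro u (rfl | hu)
  exacts [fun hu ↦ (hb t ht).not_gt hu.2, hgap u hu]

lemma insert_add_one (h : HasUnitGaps T) (hb : IsGreatest T b) :
    HasUnitGaps (insert (b + 1) T) := by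
  rintro s (rfl | hs) t (rfl | ht) hst hgap
  · exact absurd hst (lt_irrefl _)
  · linarith [hb.2 ht]
  · obtain rfl : s = b := by
      by_contra hsb
      exact hgap b (mem_insert_of_mem _ hb.1) ⟨(hb.2 hs).lt_of_ne hsb, by linarith⟩
    ring
  · exact h s hs t ht hst fun u hu ↦ hgap u (mem_insert_of_mem _ hu)

/-- A finite set with unit gaps is an arithmetic progression `a, a + 1, …, b`. -/
lemma add_one_eq_add_ncard (h : HasUnitGaps T) (hT : T.Finite) (ha : IsLeast T a)
    (hb : IsGreatest T b) : b + 1 = a + T.ncard := by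
  lift T to Finset ℝ using hT
  induction T using Finset.induction_on_max generalizing a b with
  | empty => exact absurd ha.1 (Finset.notMem_empty a)
  | insert M T hlt ih =>
    rw [Finset.coe_insert] at h ha hb
    have hMT : M ∉ T := fun hM ↦ lt_irrefl M (hlt M hM)
    obtain rfl : b = M := hb.unique
      ⟨mem_insert M _, by rintro x (rfl | hx); exacts [le_rfl, (hlt x hx).le]⟩
    rw [ncard_coe_finset, Finset.card_insert_of_notMem hMT]
    rcases T.eq_empty_or_nonempty with rfl | hne
    · obtain rfl : a = b := by simpa using ha.1
      simp
    have hmax := T.isGreatest_max' hne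
    have ha' : IsLeast (T : Set ℝ) a := by
      refine ⟨(ha.1.resolve_left fun hab ↦ ?_), fun t ht ↦ ha.2 (mem_insert_of_mem _ ht)⟩
      linarith [ha.2 (mem_insert_of_mem _ hmax.1), hlt _ hmax.1]
    have hstep : b - T.max' hne = 1 := by
      refine h _ (mem_insert_of_mem _ hmax.1) b (mem_insert b _) (hlt _ hmax.1) ?_
      rintro u (rfl | hu) hu'
      exacts [lt_irrefl _ hu'.2, (hmax.2 hu).not_gt hu'.1]
    have := ih (h.of_insert_of_forall_lt hlt) ha' hmax
    rw [ncard_coe_finset] at this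
    push_cast
    linarith

end HasUnitGaps

def armParams (c : Set S) (i : Fin k) (L : ℝ) : Set ℝ := Icc 0 L ∩ e i ⁻¹' c

section Arms

variable {S : Type*} {e : Fin k → ℝ → S} {c : Set S} {i : Fin k} {s t : ℝ}

lemma mem_armParams : t ∈ armParams e c i L ↔ t ∈ Icc 0 L ∧ e i t ∈ c := Iff.rfl

lemma arm_eq_image : arm e c i L = e i '' armParams e c i L := by
  rw [armParams, image_inter_preimage, inter_comm]
  rfl

lemma arm_nonempty_iff : (arm e c i L).Nonempty ↔ (armParams e c i L).Nonempty := by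
  rw [arm_eq_image, image_nonempty]

lemma ne_of_armParams_eq_empty {j : Fin k} (hT : armParams e c i L = ∅) (ht : t ∈ Icc 0 L)
    (htc : e j t ∈ c) : j ≠ i := by
  rintro rfl
  exact hT.subset ⟨ht, htc⟩

lemma arm_insert_self (hs : s ∈ Icc 0 L) :
    arm e (insert (e i s) c) i L = insert (e i s) (arm e c i L) :=
  insert_inter_of_mem ⟨s, hs, rfl⟩

end Arms

namespace IsStar

variable {e} {v : S} {c : Set S} {i j : Fin k} {s t a b : ℝ}

lemma zero_le (hS : IsStar v e L) : 0 ≤ L := by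
  obtain ⟨-, s, hs, -⟩ := hS.2.1 v
  exact hs.1.trans hs.2

lemma dist_eq_abs (hS : IsStar v e L) (hs : s ∈ Icc 0 L) (ht : t ∈ Icc 0 L) :
    dist (e i s) (e i t) = |s - t| := by
  simpa using hS.2.2 i i s hs t ht

lemma dist_eq_add (hS : IsStar v e L) (hij : i ≠ j) (hs : s ∈ Icc 0 L) (ht : t ∈ Icc 0 L) :
    dist (e i s) (e j t) = s + t := by
  simpa [hij] using hS.2.2 i j s hs t ht

lemma dist_center (hS : IsStar v e L) (hs : s ∈ Icc 0 L) : dist v (e i s) = s := by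
  rw [← hS.1 i, hS.dist_eq_abs ⟨le_rfl, hS.zero_le⟩ hs, zero_sub, abs_neg, abs_of_nonneg hs.1]

lemma injOn (hS : IsStar v e L) : InjOn (e i) (Icc 0 L) := fun s hs t ht hst ↦ by
  have := hS.dist_eq_abs (i := i) hs ht
  rwa [hst, dist_self, eq_comm, abs_eq_zero, sub_eq_zero] at this

lemma pos_of_apply_ne_center (hS : IsStar v e L) (hs : s ∈ Icc 0 L) (hv : e i s ≠ v) : 0 < s :=
  hs.1.lt_of_ne fun h ↦ hv (h ▸ hS.1 i)

lemma apply_ne_center (hS : IsStar v e L) (hs : s ∈ Icc 0 L) (hs0 : 0 < s) : e i s ≠ v := by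
  intro h
  have := hS.dist_center (i := i) hs
  rw [h, dist_self] at this
  exact hs0.ne this

lemma apply_notMem_starEdge (hS : IsStar v e L) (hij : i ≠ j) (hs : s ∈ Icc 0 L) (hs0 : 0 < s) :
    e i s ∉ starEdge e j L := by
  rintro ⟨t, ht, hts⟩
  have := hS.dist_eq_add hij hs ht
  rw [hts, dist_self] at this
  linarith [ht.1]

lemma armParams_finite (hS : IsStar v e L) (hc : c.Finite) : (armParams e c i L).Finite := by
  refine Finite.of_finite_image ?_ (hS.injOn (i := i) |>.mono inter_subset_left)
  rw [← arm_eq_image]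
  exact hc.subset inter_subset_left

lemma ncard_armParams (hS : IsStar v e L) :
    (armParams e c i L).ncard = (arm e c i L).ncard := by
  rw [arm_eq_image, (hS.injOn.mono inter_subset_left : InjOn (e i) (armParams e c i L)).ncard_image]

lemma isLeast_zero_armParams (hS : IsStar v e L) (hv : v ∈ c) : IsLeast (armParams e c i L) 0 :=
  ⟨mem_armParams.2 ⟨⟨le_rfl, hS.zero_le⟩, by rwa [hS.1 i]⟩, fun _ ht ↦ ht.1.1⟩

lemma center_notMem_of_armParams_eq_empty (hS : IsStar v e L) (hT : armParams e c i L = ∅) :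
    v ∉ c := fun hv ↦ hT.subset (hS.isLeast_zero_armParams hv).1

lemma armParams_insert_self (hS : IsStar v e L) (hs : s ∈ Icc 0 L) :
    armParams e (insert (e i s) c) i L = insert s (armParams e c i L) := by
  ext t
  simp only [armParams, mem_inter_iff, mem_preimage, mem_insert_iff]
  constructor
  · rintro ⟨ht, hts | htc⟩
    exacts [.inl (hS.injOn ht hs hts), .inr ⟨ht, htc⟩]
  · rintro (rfl | ⟨ht, htc⟩)
    exacts [⟨hs, .inl rfl⟩, ⟨ht, .inr htc⟩]

lemma arm_insert_of_ne (hS : IsStar v e L) (hji : j ≠ i) (hs : s ∈ Icc 0 L) (hs0 : 0 < s) :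
    arm e (insert (e i s) c) j L = arm e c j L :=
  insert_inter_of_notMem (hS.apply_notMem_starEdge hji.symm hs hs0)

lemma armParams_insert_of_ne (hS : IsStar v e L) (hji : j ≠ i) (hs : s ∈ Icc 0 L)
    (hs0 : 0 < s) : armParams e (insert (e i s) c) j L = armParams e c j L := by
  ext t
  refine and_congr_right fun ht ↦ or_iff_right fun hts ↦ ?_
  exact hS.apply_notMem_starEdge hji.symm hs hs0 ⟨t, ht, hts⟩

lemma regularConfig_iff (hS : IsStar v e L) :
    RegularConfig e v c L ↔ c.Pairwise (fun x y ↦ 1 ≤ dist x y) ∧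
      (∀ j, HasUnitGaps (armParams e c j L)) ∧
      (v ∉ c → ∀ j, (arm e c j L).Nonempty → ∃ x ∈ c, infDist x (arm e c j L) = 1) := by
  refine and_congr Iff.rfl (and_congr ⟨fun h j s hs t ht hst hgap ↦ ?_,
    fun h j s hs t ht hsc htc hst hgap ↦ ?_⟩ Iff.rfl)
  · have := h j s hs.1 t ht.1 hs.2 ht.2 hst fun u hsu hut hu ↦
      hgap u ⟨⟨hs.1.1.trans hsu.le, hut.le.trans ht.1.2⟩, hu⟩ ⟨hsu, hut⟩
    rwa [hS.dist_eq_abs hs.1 ht.1, abs_sub_comm, abs_of_pos (sub_pos.2 hst)] at this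
  · rw [hS.dist_eq_abs hs ht, abs_sub_comm, abs_of_pos (sub_pos.2 hst)]
    exact h j s ⟨hs, hsc⟩ t ⟨ht, htc⟩ hst fun u hu hu' ↦ hgap u hu'.1 hu'.2 hu.2

end IsStar

namespace RegularConfig

variable {e} {v : S} {c : Set S} {i j : Fin k} {s a b β : ℝ}

lemma hasUnitGaps (hS : IsStar v e L) (hreg : RegularConfig e v c L) (j : Fin k) :
    HasUnitGaps (armParams e c j L) :=
  (hS.regularConfig_iff.1 hreg).2.1 j

lemma exists_mem_notMem_arm (hreg : RegularConfig e v c L) (hv : v ∉ c)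
    (hne : (arm e c i L).Nonempty) :
    ∃ x ∈ c, x ∉ arm e c i L ∧ infDist x (arm e c i L) = 1 := by
  obtain ⟨x, hxc, hx⟩ := hreg.2.2 hv i hne
  refine ⟨x, hxc, fun hxA ↦ ?_, hx⟩
  rw [infDist_zero_of_mem hxA] at hx
  exact zero_ne_one hx

lemma least_lt_one (hS : IsStar v e L) (hreg : RegularConfig e v c L)
    (ha : IsLeast (armParams e c i L) a) : a < 1 := by
  by_cases hv : v ∈ c
  · rw [← (hS.isLeast_zero_armParams hv).unique ha]
    exact one_pos
  have hne : (arm e c i L).Nonempty := arm_nonempty_iff.2 ha.nonempty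
  obtain ⟨x, hxc, hxA, hx⟩ := hreg.exists_mem_notMem_arm hv hne
  obtain ⟨j, u, hu, rfl⟩ := hS.2.1 x
  have hji : j ≠ i := by
    rintro rfl
    exact hxA ⟨hxc, u, hu, rfl⟩
  have hu0 : 0 < u := hS.pos_of_apply_ne_center hu fun h ↦ hv (h ▸ hxc)
  have : u + a ≤ infDist (e j u) (arm e c i L) := by
    refine (le_infDist hne).2 ?_
    rintro _ ⟨hyc, t, ht, rfl⟩
    rw [hS.dist_eq_add hji hu ht]
    linarith [ha.2 ⟨ht, hyc⟩]
  linarith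

lemma least_add_ncard_le (hS : IsStar v e L) (hreg : RegularConfig e v c L) (hc : c.Finite)
    (ha : IsLeast (armParams e c i L) a) : a + (armParams e c i L).ncard ≤ c.ncard := by
  rw [hS.ncard_armParams]
  by_cases hv : v ∈ c
  · rw [← (hS.isLeast_zero_armParams hv).unique ha, zero_add, Nat.cast_le]
    exact ncard_le_ncard inter_subset_left hc
  obtain ⟨x, hxc, hxA, -⟩ := hreg.exists_mem_notMem_arm hv
    (arm_nonempty_iff.2 ha.nonempty)
  have hlt : (arm e c i L).ncard < c.ncard :=
    ncard_lt_ncard ⟨inter_subset_left, fun h ↦ hxA (h hxc)⟩ hc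
  have : ((arm e c i L).ncard : ℝ) + 1 ≤ c.ncard := by exact_mod_cast hlt
  linarith [hreg.least_lt_one hS ha]

lemma insert_of_one_le_dist (hS : IsStar v e L) (hreg : RegularConfig e v c L)
    (hs : s ∈ Icc 0 L) (hs0 : 0 < s) (hdist : ∀ y ∈ c, 1 ≤ dist (e i s) y)
    (hgaps : HasUnitGaps (insert s (armParams e c i L)))
    (hwit : v ∉ c → ∃ y ∈ c, infDist y (insert (e i s) (arm e c i L)) = 1) :
    RegularConfig e v (insert (e i s) c) L := by
  rw [hS.regularConfig_iff] at hreg ⊢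
  obtain ⟨hpair, hgaps', hwit'⟩ := hreg
  have hpair' : (insert (e i s) c).Pairwise (fun x y ↦ 1 ≤ dist x y) :=
    pairwise_insert.2 ⟨hpair, fun y hy _ ↦ ⟨hdist y hy, dist_comm (e i s) y ▸ hdist y hy⟩⟩
  refine ⟨hpair', fun j ↦ ?_, fun hv j hj ↦ ?_⟩
  · rcases eq_or_ne j i with rfl | hji
    · rwa [hS.armParams_insert_self hs]
    · rw [hS.armParams_insert_of_ne hji hs hs0]
      exact hgaps' j
  · have hvc : v ∉ c := fun h ↦ hv (mem_insert_of_mem _ h)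
    rcases eq_or_ne j i with rfl | hji
    · obtain ⟨y, hy, hy1⟩ := hwit hvc
      exact ⟨y, mem_insert_of_mem _ hy, by rwa [arm_insert_self hs]⟩
    · rw [hS.arm_insert_of_ne hji hs hs0] at hj ⊢
      obtain ⟨y, hy, hy1⟩ := hwit' hvc j hj
      exact ⟨y, mem_insert_of_mem _ hy, hy1⟩

lemma insert_max_add_one (hS : IsStar v e L) (hreg : RegularConfig e v c L)
    (hb : IsGreatest (armParams e c i L) b) (hbL : b + 1 ∈ Icc 0 L) :
    RegularConfig e v (insert (e i (b + 1)) c) L := by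
  have hdist : ∀ y ∈ c, 1 ≤ dist (e i (b + 1)) y := by
    intro y hy
    obtain ⟨j, t, ht, rfl⟩ := hS.2.1 y
    rcases eq_or_ne i j with rfl | hij
    · have htb := hb.2 ⟨ht, hy⟩
      rw [hS.dist_eq_abs hbL ht, abs_of_pos (by linarith)]
      linarith
    · rw [hS.dist_eq_add hij hbL ht]
      linarith [ht.1, hb.1.1.1]
  have hgaps := (hreg.hasUnitGaps hS i).insert_add_one hb
  refine hreg.insert_of_one_le_dist hS hbL (by linarith [hb.1.1.1]) hdist hgaps fun hv ↦ ?_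
  have hne := arm_nonempty_iff.2 hb.nonempty
  obtain ⟨y, hy, -, hy1⟩ := hreg.exists_mem_notMem_arm hv hne
  refine ⟨y, hy, ?_⟩
  rwa [infDist_insert_of_infDist_le_dist hne (by rw [hy1, dist_comm]; exact hdist y hy)]

lemma eq_max_add_one_of_insert (hS : IsStar v e L) (hreg : RegularConfig e v c L)
    (hc : c.Finite) (ha : IsLeast (armParams e c i L) a) (hb : IsGreatest (armParams e c i L) b)
    (hs : s ∈ Icc 0 L) (hsc : e i s ∉ c) (h : RegularConfig e v (insert (e i s) c) L) :
    s = b + 1 := by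
  have hT := hS.armParams_finite (i := i) hc
  have hsT : s ∉ armParams e c i L := fun h' ↦ hsc h'.2
  rw [hS.regularConfig_iff] at h
  have has : a ≤ s := by
    by_contra! hsa
    have : 1 ≤ dist (e i s) (e i a) :=
      h.1 (mem_insert _ _) (mem_insert_of_mem _ ha.1.2) fun h' ↦ hsc (by rw [h']; exact ha.1.2)
    rw [hS.dist_eq_abs hs ha.1.1, abs_of_neg (by linarith)] at this
    linarith [hreg.least_lt_one hS ha, hs.1]
  have hgaps := h.2.1 i
  rw [hS.armParams_insert_self hs] at hgaps
  have hinsert := hgaps.add_one_eq_add_ncard (hT.insert s)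
    ⟨mem_insert_of_mem _ ha.1, by rintro t (rfl | ht); exacts [has, ha.2 ht]⟩ (hb.insert s)
  have hold := (hreg.hasUnitGaps hS i).add_one_eq_add_ncard hT ha hb
  rw [ncard_insert_of_notMem hsT hT] at hinsert
  push_cast at hinsert
  rcases max_choice s b with hmax | hmax <;> rw [hmax] at hinsert <;> linarith

lemma insert_one_sub (hS : IsStar v e L) (hreg : RegularConfig e v c L)
    (hT : armParams e c i L = ∅) (hβ : β ∈ Icc 0 L) (hyc : e j β ∈ c)
    (hmin : ∀ y ∈ c, β ≤ dist v y) (hβ1 : β < 1) (hs : 1 - β ∈ Icc 0 L) :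
    RegularConfig e v (insert (e i (1 - β)) c) L := by
  have hdist : ∀ y ∈ c, 1 ≤ dist (e i (1 - β)) y := by
    intro y hy
    obtain ⟨j', u, hu, rfl⟩ := hS.2.1 y
    rw [hS.dist_eq_add (ne_of_armParams_eq_empty hT hu hy).symm hs hu]
    linarith [hS.dist_center hu ▸ hmin _ hy]
  have hgaps : HasUnitGaps (insert (1 - β) (armParams e c i L)) := by
    rw [hT, insert_empty_eq]
    exact hasUnitGaps_singleton _
  refine hreg.insert_of_one_le_dist hS hs (by linarith) hdist hgaps fun _ ↦ ⟨e j β, hyc, ?_⟩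
  rw [arm_eq_image, hT, image_empty, insert_empty_eq, infDist_singleton,
    hS.dist_eq_add (ne_of_armParams_eq_empty hT hβ hyc) hβ hs]
  ring

lemma eq_one_sub_of_insert (hS : IsStar v e L) (hT : armParams e c i L = ∅) (hβ : β ∈ Icc 0 L)
    (hyc : e j β ∈ c) (hmin : ∀ y ∈ c, β ≤ dist v y) (hβ1 : β < 1) (hs : s ∈ Icc 0 L)
    (hsc : e i s ∉ c) (h : RegularConfig e v (insert (e i s) c) L) : s = 1 - β := by
  have hlow : 1 ≤ dist (e i s) (e j β) :=
    h.1 _ (mem_insert _ _) _ (mem_insert_of_mem _ hyc) fun h' ↦ hsc (by rw [h']; exact hyc)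
  rw [hS.dist_eq_add (ne_of_armParams_eq_empty hT hβ hyc).symm hs hβ] at hlow
  have hv : v ∉ insert (e i s) c := by
    rintro (hvs | hvc)
    · exact hS.apply_ne_center hs (by linarith) hvs.symm
    · exact hS.center_notMem_of_armParams_eq_empty hT hvc
  obtain ⟨y, hy, hy1⟩ := h.2.2 hv i ⟨e i s, mem_insert _ _, s, hs, rfl⟩
  rw [arm_insert_self hs, arm_eq_image, hT, image_empty, insert_empty_eq,
    infDist_singleton] at hy1
  rcases hy with rfl | hy
  · simp at hy1
  obtain ⟨j', u, hu, rfl⟩ := hS.2.1 y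
  rw [hS.dist_eq_add (ne_of_armParams_eq_empty hT hu hy) hu hs] at hy1
  linarith [hS.dist_center hu ▸ hmin _ hy]

/-- Every edge carries exactly one parameter at which a point can be added to `c`: one step
beyond the arm if it is nonempty, and otherwise at distance `1` from the point of `c` nearest
to the center. -/
lemma exists_insertion_param (hS : IsStar v e L) (hreg : RegularConfig e v c L) (hc : c.Finite)
    (hne : c.Nonempty) (hcL : (c.ncard : ℝ) ≤ L) (i : Fin k) :
    ∃ s₀ ∈ Icc 0 L, e i s₀ ∉ c ∧ ∀ s ∈ Icc 0 L, e i s ∉ c →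
      (RegularConfig e v (insert (e i s) c) L ↔ s = s₀) := by
  rcases (armParams e c i L).eq_empty_or_nonempty with hT | hT
  · obtain ⟨y, hy, hmin⟩ := exists_min_image c (dist v) hc hne
    obtain ⟨j, β, hβ, rfl⟩ := hS.2.1 y
    rw [hS.dist_center hβ] at hmin
    have hβ1 : β < 1 :=
      hreg.least_lt_one hS ⟨⟨hβ, hy⟩, fun t ht ↦ hS.dist_center ht.1 ▸ hmin _ ht.2⟩
    have hL : (1 : ℝ) ≤ L := (Nat.one_le_cast.2 ((ncard_pos hc).2 hne)).trans hcL
    have hs : 1 - β ∈ Icc 0 L := ⟨by linarith, by linarith [hβ.1]⟩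
    refine ⟨1 - β, hs, fun h ↦ hT.subset ⟨hs, h⟩, fun s hs' hsc ↦
      ⟨eq_one_sub_of_insert hS hT hβ hy hmin hβ1 hs' hsc, ?_⟩⟩
    rintro rfl
    exact hreg.insert_one_sub hS hT hβ hy hmin hβ1 hs
  · have hfin := hS.armParams_finite (i := i) hc
    obtain ⟨a, ha, ha'⟩ := exists_min_image _ id hfin hT
    obtain ⟨b, hb, hb'⟩ := exists_max_image _ id hfin hT
    replace ha : IsLeast (armParams e c i L) a := ⟨ha, ha'⟩
    replace hb : IsGreatest (armParams e c i L) b := ⟨hb, hb'⟩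
    have hbL : b + 1 ∈ Icc 0 L := ⟨by linarith [hb.1.1.1], by
      linarith [(hreg.hasUnitGaps hS i).add_one_eq_add_ncard hfin ha hb,
        hreg.least_add_ncard_le hS hc ha]⟩
    refine ⟨b + 1, hbL, fun h ↦ by linarith [hb.2 ⟨hbL, h⟩], fun s hs hsc ↦
      ⟨hreg.eq_max_add_one_of_insert hS hc ha hb hs hsc, ?_⟩⟩
    rintro rfl
    exact hreg.insert_max_add_one hS hb hbL

end RegularConfig

theorem unique_insertion_point_general (n : ℕ) (hn : 2 ≤ n)
    (hL : max 1 ((n : ℝ) - 1) ≤ L)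
    {S : Type*} [MetricSpace S] (v : S) (e : Fin k → ℝ → S) (hstar : IsStar v e L)
    (c : Set S) (hfin : c.Finite) (hcard : c.ncard = n - 1)
    (hreg : RegularConfig e v c L) (i : Fin k) :
    ∃! x : S, x ∈ starEdge e i L ∧ x ∉ c ∧
      (insert x c).ncard = n ∧ RegularConfig e v (insert x c) L := by
  have hne : c.Nonempty := (ncard_pos hfin).1 (by omega)
  have hcL : (c.ncard : ℝ) ≤ L := by
    rw [hcard, Nat.cast_sub (by omega), Nat.cast_one]
    exact (le_max_right _ _).trans hL
  obtain ⟨s₀, hs₀, hs₀c, hiff⟩ := hreg.exists_insertion_param hstar hfin hne hcL i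
  refine ⟨e i s₀, ⟨⟨s₀, hs₀, rfl⟩, hs₀c, ?_, (hiff s₀ hs₀ hs₀c).2 rfl⟩, ?_⟩
  · rw [ncard_insert_of_notMem hs₀c hfin, hcard]
    omega
  · rintro _ ⟨⟨s, hs, rfl⟩, hsc, -, hreg'⟩
    rw [(hiff s hs hsc).1 hreg']

/-- For a regular `(n-1)`-point configuration `c` in the star with
`k ≥ 3` edges of length `L ≥ max(1, n-1)` (`n ≥ 2`), for each index `i` there is a unique
point `x` on the `i`-th edge with `x ∉ c` such that `{x} ∪ c` is a regular `n`-point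
configuration. -/
theorem unique_insertion_point (hk : 3 ≤ k) (n : ℕ) (hn : 2 ≤ n)
    (hL : max 1 ((n : ℝ) - 1) ≤ L)
    {S : Type*} [MetricSpace S] (v : S) (e : Fin k → ℝ → S) (hstar : IsStar v e L)
    (c : Set S) (hfin : c.Finite) (hcard : c.ncard = n - 1)
    (hreg : RegularConfig e v c L) (i : Fin k) :
    ∃! x : S, x ∈ starEdge e i L ∧ x ∉ c ∧
      (insert x c).ncard = n ∧ RegularConfig e v (insert x c) L :=
  unique_insertion_point_general n hn hL v e hstar c hfin hcard hreg i

end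
end
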